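/- The function d ↦ sum_{k=0}^{d} C(d,k) 2^{-d} H_b(k/d) minus (log 2)/d is positive for all d ≥ 3, where H_b is the binary entropy function; equivalently, the binomial-averaged entropy exceeds (log 2)/d for d ≥ 3. -/
import Mathlib


open Finset

lemma aux_mono {d k : ℕ} (hk1 : 1 ≤ k) (hkd : k + 1 ≤ d) :
    Real.binEntropy (1 / d) ≤ Real.binEntropy ((k : ℝ) / d) := by
  have hd2 : 2 ≤ d := le_trans (by omega) hkd
  have hd0 : (0:ℝ) < d := by positivity
  have hmem1 : (1:ℝ)/d ∈ Set.Icc (0:ℝ) 2⁻¹ := by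
    constructor
    · positivity
    · rw [div_le_iff₀ hd0]
      have : (2:ℝ) ≤ d := by exact_mod_cast hd2
      linarith
  rcases le_or_gt ((k : ℝ)/d) 2⁻¹ with h | h
  · apply Real.binEntropy_strictMonoOn.monotoneOn hmem1 ⟨by positivity, h⟩
    apply div_le_div_of_nonneg_right ?_ hd0.le |>.trans_eq rfl
    exact_mod_cast hk1
  · rw [← Real.binEntropy_one_sub ((k:ℝ)/d)]
    have hk_le : (k:ℝ) ≤ d - 1 := by
      have : (k:ℝ) + 1 ≤ d := by exact_mod_cast hkd
      linarith
    have hmem2 : 1 - (k:ℝ)/d ∈ Set.Icc (0:ℝ) 2⁻¹ := by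
      constructor
      · have : (k:ℝ)/d ≤ 1 := by
          rw [div_le_one hd0]; linarith
        linarith
      · linarith
    apply Real.binEntropy_strictMonoOn.monotoneOn hmem1 hmem2
    rw [div_le_iff₀ hd0, sub_mul, one_mul, div_mul_cancel₀ _ hd0.ne']
    linarith

lemma aux_logd {d : ℕ} (hd : 1 ≤ d) : Real.log d / d ≤ Real.binEntropy (1 / d) := by
  have hd0 : (0:ℝ) < d := by positivity
  have hd1 : (1:ℝ) ≤ d := by exact_mod_cast hd
  unfold Real.binEntropy
  have h1 : ((1:ℝ)/d)⁻¹ = (d:ℝ) := by field_simp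
  have h2 : (0:ℝ) ≤ (1 - 1/(d:ℝ)) * Real.log (1 - 1/(d:ℝ))⁻¹ := by
    rcases eq_or_lt_of_le hd1 with h | h
    · rw [← h]; norm_num
    · have hpos : (0:ℝ) < 1 - 1/(d:ℝ) := by
        rw [sub_pos, div_lt_one hd0]; linarith
      have : (1:ℝ) ≤ (1 - 1/(d:ℝ))⁻¹ := by
        rw [le_inv_comm₀ one_pos hpos]
        have : (0:ℝ) < 1/(d:ℝ) := by positivity
        linarith
      have := Real.log_nonneg this
      positivity
  rw [h1]
  have : Real.log d / d = 1/d * Real.log d := by ring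
  linarith [this]

/-- For all d ≥ 3 the binomial-averaged binary entropy exceeds (log 2)/d:
∑_{k=0}^d C(d,k) 2^{-d} H_b(k/d) > (log 2)/d. -/
theorem stmt17 (d : ℕ) (hd : 3 ≤ d) :
    Real.log 2 / d <
      ∑ k ∈ Finset.range (d + 1),
        (d.choose k : ℝ) / 2 ^ d * Real.binEntropy ((k : ℝ) / d) := by
  have hd0 : (0:ℝ) < d := by positivity
  -- Step 1: restrict to Ico 1 d and lower-bound each term
  have hsub : Finset.Ico 1 d ⊆ Finset.range (d + 1) := by
    intro k hk
    simp only [Finset.mem_Ico] at hk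
    simp only [Finset.mem_range]
    omega
  have h1 : ∑ k ∈ Finset.Ico 1 d, (d.choose k : ℝ) / 2 ^ d * Real.binEntropy (1 / d)
      ≤ ∑ k ∈ Finset.range (d + 1),
        (d.choose k : ℝ) / 2 ^ d * Real.binEntropy ((k : ℝ) / d) := by
    calc ∑ k ∈ Finset.Ico 1 d, (d.choose k : ℝ) / 2 ^ d * Real.binEntropy (1 / d)
        ≤ ∑ k ∈ Finset.Ico 1 d, (d.choose k : ℝ) / 2 ^ d * Real.binEntropy ((k : ℝ) / d) := by
          apply Finset.sum_le_sum
          intro k hk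
          simp only [Finset.mem_Ico] at hk
          have := aux_mono (d := d) (k := k) hk.1 hk.2
          have hc : (0:ℝ) ≤ (d.choose k : ℝ) / 2 ^ d := by positivity
          exact mul_le_mul_of_nonneg_left this hc
      _ ≤ _ := by
          apply Finset.sum_le_sum_of_subset_of_nonneg hsub
          intro k hk _
          have hk' : k ≤ d := by simp only [Finset.mem_range] at hk; omega
          have h0 : (0:ℝ) ≤ (k:ℝ)/d := by positivity
          have h1k : (k:ℝ)/d ≤ 1 := by
            rw [div_le_one hd0]; exact_mod_cast hk'
          have := Real.binEntropy_nonneg h0 h1k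
          positivity
  -- Step 2: compute the left sum
  have hsum : ∑ k ∈ Finset.Ico 1 d, (d.choose k : ℝ) = 2 ^ d - 2 := by
    have h := Nat.sum_range_choose d
    have hdecomp : Finset.range (d + 1) = insert 0 (insert d (Finset.Ico 1 d)) := by
      ext k
      simp only [Finset.mem_range, Finset.mem_insert, Finset.mem_Ico]
      omega
    have hnot0 : 0 ∉ insert d (Finset.Ico 1 d) := by
      simp only [Finset.mem_insert, Finset.mem_Ico]
      omega
    have hnotd : d ∉ Finset.Ico 1 d := by simp
    have := congrArg (Nat.cast : ℕ → ℝ) h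
    push_cast at this
    rw [hdecomp, Finset.sum_insert hnot0, Finset.sum_insert hnotd] at this
    simp only [Nat.choose_zero_right, Nat.choose_self, Nat.cast_one] at this
    linarith
  have h2 : ∑ k ∈ Finset.Ico 1 d, (d.choose k : ℝ) / 2 ^ d * Real.binEntropy (1 / d)
      = (2 ^ d - 2) / 2 ^ d * Real.binEntropy (1 / d) := by
    rw [← Finset.sum_mul, ← Finset.sum_div, hsum]
  -- Step 3: numeric bound
  have hfrac : (3:ℝ)/4 ≤ (2 ^ d - 2) / 2 ^ d := by
    have h8 : (8:ℝ) ≤ 2 ^ d := by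
      calc (8:ℝ) = 2^3 := by norm_num
        _ ≤ 2 ^ d := by
          apply pow_le_pow_right₀ (by norm_num) hd
    rw [le_div_iff₀ (by positivity)]
    linarith
  have hlog3 : Real.log 2 < 3/4 * Real.log 3 := by
    have h27 : (16:ℝ) < 27 := by norm_num
    have := Real.log_lt_log (by norm_num : (0:ℝ) < 16) h27
    rw [show (16:ℝ) = 2^4 by norm_num, show (27:ℝ) = 3^3 by norm_num,
      Real.log_pow, Real.log_pow] at this
    push_cast at this
    linarith
  have hlogd : Real.log 3 ≤ Real.log d := by
    apply Real.log_le_log (by norm_num)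
    exact_mod_cast hd
  have hHb : Real.log d / d ≤ Real.binEntropy (1 / d) := aux_logd (by omega)
  have hlogd_pos : 0 < Real.log d := by
    apply Real.log_pos
    have : (3:ℝ) ≤ d := by exact_mod_cast hd
    linarith
  -- combine
  have key : Real.log 2 / d < (2 ^ d - 2) / 2 ^ d * Real.binEntropy (1 / d) := by
    have hH_pos : 0 < Real.binEntropy (1/d) := lt_of_lt_of_le (by positivity) hHb
    calc Real.log 2 / d < (3/4 * Real.log 3) / d := by
          gcongr
      _ ≤ (3/4) * (Real.log d / d) := by
          rw [mul_div_assoc]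
          apply mul_le_mul_of_nonneg_left ?_ (by norm_num)
          exact div_le_div_of_nonneg_right hlogd hd0.le
      _ ≤ (3/4) * Real.binEntropy (1/d) := by
          apply mul_le_mul_of_nonneg_left hHb (by norm_num)
      _ ≤ (2 ^ d - 2) / 2 ^ d * Real.binEntropy (1 / d) := by
          apply mul_le_mul_of_nonneg_right hfrac hH_pos.le
  linarith [h1, h2, key]
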